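/- If X is a nonempty proper subcomplex of the boundary sphere Δ \ {[n]} (the full simplex minus its top face), then the geometric realization of the Alexander dual X^∨ is homotopy equivalent to the complement S^{n-2} \ |X| of the realization of X in the (n-2)-sphere. -/

import Mathlib

open Finset
open scoped Classical

/-- A (finite abstract) simplicial complex on vertex set `[n]`, modeled as a
set of finsets of `Fin n`. -/
abbrev SComplex (n : ℕ) := Set (Finset (Fin n))

/-- `X` is a simplicial complex: closed under taking subsets. -/
def IsSComplex {n : ℕ} (X : SComplex n) : Prop := ∀ F ∈ X, ∀ G ⊆ F, G ∈ X

/-- Alexander dual complex `X^∨ = {F | Fᶜ ∉ X}`. -/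
def dualC {n : ℕ} (X : SComplex n) : SComplex n := {F | Fᶜ ∉ X}

/-- Link of a face `F` in `X`. -/
def linkC {n : ℕ} (F : Finset (Fin n)) (X : SComplex n) : SComplex n :=
  {G | F ∪ G ∈ X ∧ F ∩ G = ∅}

/-- Star of a face `F` in `X`. -/
def starC {n : ℕ} (F : Finset (Fin n)) (X : SComplex n) : SComplex n :=
  {G | F ∪ G ∈ X}

/-- Full subcomplex of `X` on the vertex set `b`. -/
def restC {n : ℕ} (X : SComplex n) (b : Finset (Fin n)) : SComplex n :=
  {F | F ∈ X ∧ F ⊆ b}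

/-- Faces of `X` of cardinality `m` (so of dimension `m - 1`). -/
def Faces {n : ℕ} (X : SComplex n) (m : ℤ) : Type :=
  {F : Finset (Fin n) // F ∈ X ∧ (F.card : ℤ) = m}

instance {n : ℕ} (X : SComplex n) (m : ℤ) : Finite (Faces X m) :=
  Subtype.finite

/-- The simplicial boundary map on (reduced, oriented) chains with coefficients in `R`:
from chains in simplicial dimension `d` (faces of cardinality `d+1`) to chains in
dimension `d-1`.  `(∂ f) G = ∑_v ± f (insert v G)`. -/
noncomputable def chainBd (R : Type) [CommRing R] {n : ℕ} (X : SComplex n) (d : ℤ) :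
    (Faces X (d + 1) → R) →ₗ[R] (Faces X d → R) where
  toFun f G := ∑ v : Fin n,
    if h : v ∉ G.1 ∧ insert v G.1 ∈ X then
      ((-1 : R) ^ (G.1.filter (· < v)).card) *
        f ⟨insert v G.1, h.2, by
          have := G.2.2
          rw [Finset.card_insert_of_notMem h.1]
          push_cast
          omega⟩
    else 0
  map_add' f g := by
    funext G
    rw [Pi.add_apply, ← Finset.sum_add_distrib]
    refine Finset.sum_congr rfl fun v _ => ?_
    split_ifs with h
    · exact mul_add _ _ _
    · simp
  map_smul' c f := by
    funext G
    try dsimp only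
    rw [Pi.smul_apply, smul_eq_mul, Finset.mul_sum]
    apply Finset.sum_congr rfl
    intro v _
    split_ifs with h
    · rw [RingHom.id_apply]; exact mul_left_comm _ _ _
    · simp

/-- The reduced simplicial homology of `X` in dimension `d`, with coefficients in `R`,
as a module: cycles modulo boundaries. -/
noncomputable def hredMod (R : Type) [CommRing R] {n : ℕ} (X : SComplex n) (d : ℤ) :=
  LinearMap.ker (chainBd R X d) ⧸
    Submodule.comap (LinearMap.ker (chainBd R X d)).subtype
      (LinearMap.range (chainBd R X (d + 1)))

/-- The dimension of the reduced simplicial homology `H̃_d(X; k)` over a field `k`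
(computed as `dim ker ∂_d - dim im ∂_{d+1}`). -/
noncomputable def hred (k : Type) [Field k] {n : ℕ} (X : SComplex n) (d : ℤ) : ℕ :=
  Module.finrank k (LinearMap.ker (chainBd k X d)) -
    Module.finrank k (LinearMap.range (chainBd k X (d + 1)))


open Finset in
/-- Geometric realization of a simplicial complex on `[n]`, inside the standard
simplex in `ℝ^n`: points with nonnegative coordinates summing to `1` whose
support is a face of `X`. -/
def geomReal {n : ℕ} (X : SComplex n) : Set (Fin n → ℝ) :=
  {x | (∀ j, 0 ≤ x j) ∧ (∑ j, x j) = 1 ∧ (Finset.univ.filter fun j => x j ≠ 0) ∈ X}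

/-- The boundary complex `Δ \ {[n]}` of the full simplex, whose realization is
the sphere `S^{n-2}`. -/
def boundaryComplex (n : ℕ) : SComplex n := {F | F ≠ Finset.univ}

namespace AD
variable {n : ℕ}

/-- number of coordinates `≥ t` -/
noncomputable def mct (x : Fin n → ℝ) (t : ℝ) : ℕ := (univ.filter fun j => t ≤ x j).card

/-- the `q`-th largest coordinate value (for `1 ≤ q ≤ n`) -/
noncomputable def nv (n q : ℕ) (x : Fin n → ℝ) : ℝ :=
  if h : ((univ : Finset (Fin n)).powersetCard q).Nonempty then
    ((univ : Finset (Fin n)).powersetCard q).sup' h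
      (fun F => if hF : F.Nonempty then F.inf' hF x else 0)
  else 0

lemma mct_le (x : Fin n → ℝ) (t : ℝ) : mct x t ≤ n := by
  classical
  calc mct x t ≤ (univ : Finset (Fin n)).card := card_le_card (filter_subset _ _)
  _ = n := by simp

lemma le_nv_iff {q : ℕ} (hq : 1 ≤ q) (hqn : q ≤ n) (x : Fin n → ℝ) {t : ℝ} :
    t ≤ nv n q x ↔ q ≤ mct x t := by
  have hne : ((univ : Finset (Fin n)).powersetCard q).Nonempty := by
    rw [Finset.powersetCard_nonempty]; simpa using hqn
  rw [nv, dif_pos hne]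
  constructor
  · intro h
    obtain ⟨F, hF, hFe⟩ := Finset.exists_mem_eq_sup' hne
      (fun F => if hF : F.Nonempty then F.inf' hF x else 0)
    rw [Finset.mem_powersetCard] at hF
    have hFne : F.Nonempty := Finset.card_pos.mp (by omega)
    rw [hFe, dif_pos hFne] at h
    have hsub : F ⊆ univ.filter fun j => t ≤ x j := by
      intro j hj
      simp only [mem_filter, mem_univ, true_and]
      exact le_trans h (Finset.inf'_le x hj)
    calc q = F.card := hF.2.symm
    _ ≤ _ := Finset.card_le_card hsub
  · intro h
    obtain ⟨F, hFsub, hFcard⟩ := Finset.exists_subset_card_eq h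
    have hFmem : F ∈ (univ : Finset (Fin n)).powersetCard q :=
      Finset.mem_powersetCard.mpr ⟨Finset.subset_univ _, hFcard⟩
    have hFne : F.Nonempty := Finset.card_pos.mp (by omega)
    refine le_trans ?_ (Finset.le_sup' _ hFmem)
    rw [dif_pos hFne]
    rw [Finset.le_inf'_iff]
    intro j hj
    exact (mem_filter.mp (hFsub hj)).2

lemma le_nv_self {q : ℕ} (hq : 1 ≤ q) (hqn : q ≤ n) (x : Fin n → ℝ) :
    q ≤ mct x (nv n q x) := (le_nv_iff hq hqn x).mp le_rfl

lemma nv_antitone {q q' : ℕ} (hq : 1 ≤ q) (hqq' : q ≤ q') (hq'n : q' ≤ n) (x : Fin n → ℝ) :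
    nv n q' x ≤ nv n q x := by
  apply (le_nv_iff hq (le_trans hqq' hq'n) x).mpr
  exact le_trans hqq' (le_nv_self (le_trans hq hqq') hq'n x)

lemma le_nv_one (hn : 1 ≤ n) (x : Fin n → ℝ) (j : Fin n) : x j ≤ nv n 1 x := by
  apply (le_nv_iff le_rfl hn x).mpr
  refine Finset.card_pos.mpr ⟨j, ?_⟩
  simp

lemma nv_n_le (hn : 1 ≤ n) (x : Fin n → ℝ) (j : Fin n) : nv n n x ≤ x j := by
  have h1 := le_nv_self hn le_rfl x
  have h2 : (univ.filter fun k => nv n n x ≤ x k) = univ := by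
    apply Finset.eq_univ_of_card
    have := mct_le x (nv n n x)
    simp only [mct] at h1 this
    simp only [Fintype.card_fin]
    omega
  have hj : j ∈ univ.filter fun k => nv n n x ≤ x k := by rw [h2]; exact mem_univ j
  exact (mem_filter.mp hj).2

lemma nv_mct (x : Fin n → ℝ) (j : Fin n) : nv n (mct x (x j)) x = x j := by
  set p := mct x (x j) with hp
  have hp1 : 1 ≤ p := Finset.card_pos.mpr ⟨j, by simp⟩
  have hpn : p ≤ n := mct_le x (x j)
  have h1 : x j ≤ nv n p x := (le_nv_iff hp1 hpn x).mpr le_rfl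
  refine le_antisymm ?_ h1
  by_contra hlt
  push_neg at hlt
  have h2 : p ≤ mct x (nv n p x) := le_nv_self hp1 hpn x
  have h3 : (univ.filter fun k => nv n p x ≤ x k) ⊆ univ.filter fun k => x j < x k := by
    intro k hk
    simp only [mem_filter, mem_univ, true_and] at hk ⊢
    exact lt_of_lt_of_le hlt hk
  have h4 : insert j (univ.filter fun k => x j < x k) ⊆ univ.filter fun k => x j ≤ x k := by
    intro k hk
    rcases Finset.mem_insert.mp hk with h | h
    · subst h; simp
    · simp only [mem_filter, mem_univ, true_and] at h ⊢; exact h.le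
  have hj : j ∉ univ.filter fun k => x j < x k := by simp
  have h5 : (univ.filter fun k => x j < x k).card + 1 ≤ p := by
    rw [hp, mct]
    calc (univ.filter fun k => x j < x k).card + 1
        = (insert j (univ.filter fun k => x j < x k)).card :=
          (Finset.card_insert_of_notMem hj).symm
    _ ≤ _ := Finset.card_le_card h4
  have h6 := Finset.card_le_card h3
  simp only [mct] at h2
  omega

lemma nv_n_eq_zero (hn : 1 ≤ n) {x : Fin n → ℝ} (h0 : ∀ k, 0 ≤ x k) (hz : ∃ k, x k = 0) :
    nv n n x = 0 := by
  obtain ⟨k, hk⟩ := hz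
  refine le_antisymm (by simpa [hk] using nv_n_le hn x k) ?_
  apply (le_nv_iff hn le_rfl x).mpr
  have : (univ.filter fun j => (0:ℝ) ≤ x j) = univ := by
    apply Finset.eq_univ_of_forall
    intro j; simp [h0 j]
  simp [mct, this]

lemma min_nv_sub {p : ℕ} (hp : 1 ≤ p) (hpn : p + 1 ≤ n) (x : Fin n → ℝ) (j : Fin n) :
    min (nv n p x) (x j) - min (nv n (p+1) x) (x j)
      = if nv n p x ≤ x j then nv n p x - nv n (p+1) x else 0 := by
  by_cases h1 : nv n p x ≤ x j
  · have h2 : nv n (p+1) x ≤ x j := le_trans (nv_antitone hp (by omega) hpn x) h1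
    rw [if_pos h1, min_eq_left h1, min_eq_left h2]
  · rw [if_neg h1]
    push_neg at h1
    rw [min_eq_right h1.le]
    by_cases h2 : x j ≤ nv n (p+1) x
    · rw [min_eq_right h2, sub_self]
    · push_neg at h2
      exfalso
      have hq := nv_mct x j
      set q := mct x (x j) with hqdef
      have hq1 : 1 ≤ q := Finset.card_pos.mpr ⟨j, by simp⟩
      have hqn : q ≤ n := mct_le x (x j)
      have hnot : ¬ (p + 1 ≤ q) := by
        intro hc
        exact h2.not_ge ((le_nv_iff (by omega) hpn x).mpr hc)
      have : nv n p x ≤ nv n q x := nv_antitone hq1 (by omega) (by omega) x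
      rw [hq] at this
      exact h1.not_ge this

lemma tele (f : ℕ → ℝ) {a b : ℕ} (h : a ≤ b) :
    ∑ p ∈ Ico a b, (f p - f (p+1)) = f a - f b := by
  induction b, h using Nat.le_induction with
  | base => simp
  | succ b hb ih => rw [Finset.sum_Ico_succ_top hb, ih]; ring


section Cont
variable {α : Type*} [TopologicalSpace α]

lemma cont_sup' {ι : Type*} {s : Finset ι} (hs : s.Nonempty) {g : ι → α → ℝ}
    (hg : ∀ i, Continuous (g i)) : Continuous fun x => s.sup' hs (fun i => g i x) := by
  induction hs using Finset.Nonempty.cons_induction with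
  | singleton i =>
      have he : (fun x => ({i} : Finset ι).sup' (Finset.singleton_nonempty i) fun j => g j x) = g i := by
        funext x; exact Finset.sup'_singleton (fun j => g j x)
      exact he ▸ hg i
  | cons i s hi hs ih =>
      have he : (fun x => (Finset.cons i s hi).sup' (Finset.cons_nonempty hi) fun j => g j x)
          = fun x => max (g i x) (s.sup' hs fun j => g j x) := by
        funext x; exact Finset.sup'_cons hs (fun j => g j x)
      rw [he]
      exact (hg i).max ih

lemma cont_inf' {ι : Type*} {s : Finset ι} (hs : s.Nonempty) {g : ι → α → ℝ}
    (hg : ∀ i, Continuous (g i)) : Continuous fun x => s.inf' hs (fun i => g i x) := by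
  induction hs using Finset.Nonempty.cons_induction with
  | singleton i =>
      have he : (fun x => ({i} : Finset ι).inf' (Finset.singleton_nonempty i) fun j => g j x) = g i := by
        funext x; exact Finset.inf'_singleton (fun j => g j x)
      exact he ▸ hg i
  | cons i s hi hs ih =>
      have he : (fun x => (Finset.cons i s hi).inf' (Finset.cons_nonempty hi) fun j => g j x)
          = fun x => min (g i x) (s.inf' hs fun j => g j x) := by
        funext x; exact Finset.inf'_cons hs (fun j => g j x)
      rw [he]
      exact (hg i).min ih

lemma cont_dinf (F : Finset (Fin n)) :
    Continuous fun x : Fin n → ℝ => if hF : F.Nonempty then F.inf' hF x else 0 := by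
  by_cases hF : F.Nonempty
  · simp only [dif_pos hF]
    exact cont_inf' hF (fun j => continuous_apply j)
  · simp only [dif_neg hF]
    exact continuous_const

lemma nv_cont (q : ℕ) : Continuous fun x : Fin n → ℝ => nv n q x := by
  unfold nv
  by_cases h : ((univ : Finset (Fin n)).powersetCard q).Nonempty
  · simp only [dif_pos h]
    exact cont_sup' h (fun F => cont_dinf F)
  · simp only [dif_neg h]
    exact continuous_const

end Cont

/-- coefficient `a_q = f(q) - f(q-1)` for `f(q) = q/(n-q)` -/
noncomputable def aco (n q : ℕ) : ℝ := (n : ℝ) / (((n:ℝ) - q) * ((n:ℝ) - q + 1))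

noncomputable def phi (n : ℕ) (x : Fin n → ℝ) : Fin n → ℝ :=
  fun j => ∑ q ∈ Ico 1 n, aco n q * (nv n q x - min (nv n q x) (x j))

lemma aco_pos {q : ℕ} (hqn : q < n) : 0 < aco n q := by
  have h1 : (0:ℝ) < (n:ℝ) - q := by
    have : (q:ℝ) < n := by exact_mod_cast hqn
    linarith
  have h2 : (0:ℝ) < n := lt_of_le_of_lt (by positivity) (lt_of_sub_pos h1)
  exact div_pos h2 (by nlinarith)

lemma phi_cont : Continuous (phi n) := by
  apply continuous_pi
  intro j
  apply continuous_finset_sum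
  intro q hq
  exact continuous_const.mul ((nv_cont q).sub (((nv_cont q).min (continuous_apply j))))

lemma phi_term_nonneg (x : Fin n → ℝ) (j : Fin n) {q : ℕ} (hq : q ∈ Ico 1 n) :
    0 ≤ aco n q * (nv n q x - min (nv n q x) (x j)) := by
  rw [mem_Ico] at hq
  exact mul_nonneg (aco_pos hq.2).le (by simp [min_le_left])

lemma phi_nonneg (x : Fin n → ℝ) (j : Fin n) : 0 ≤ phi n x j :=
  Finset.sum_nonneg (fun q hq => phi_term_nonneg x j hq)

lemma phi_supp (hn : 2 ≤ n) (x : Fin n → ℝ) (j : Fin n) :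
    phi n x j ≠ 0 ↔ x j < nv n 1 x := by
  have h1 : phi n x j = 0 ↔ ∀ q ∈ Ico 1 n, aco n q * (nv n q x - min (nv n q x) (x j)) = 0 :=
    Finset.sum_eq_zero_iff_of_nonneg (fun q hq => phi_term_nonneg x j hq)
  have key : phi n x j = 0 ↔ nv n 1 x ≤ x j := by
    rw [h1]
    constructor
    · intro h
      have h2 := h 1 (by rw [mem_Ico]; omega)
      have h3 : aco n 1 ≠ 0 := (aco_pos (by omega)).ne'
      have h4 : nv n 1 x - min (nv n 1 x) (x j) = 0 := by
        rcases mul_eq_zero.mp h2 with h | h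
        · exact absurd h h3
        · exact h
      have h5 : min (nv n 1 x) (x j) = nv n 1 x := by linarith
      exact min_eq_left_iff.mp h5
    · intro h q hq
      rw [mem_Ico] at hq
      have : nv n q x ≤ x j := le_trans (nv_antitone le_rfl hq.1 (by omega) x) h
      rw [min_eq_left this, sub_self, mul_zero]
  rw [← not_le (a := nv n 1 x)]
  exact not_congr key

lemma phi_mono (x : Fin n → ℝ) {j k : Fin n} (h : x k ≤ x j) : phi n x j ≤ phi n x k := by
  apply Finset.sum_le_sum
  intro q hq
  rw [mem_Ico] at hq
  apply mul_le_mul_of_nonneg_left _ (aco_pos hq.2).le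
  apply sub_le_sub_left
  exact min_le_min le_rfl h

lemma phi_strict (hn : 2 ≤ n) {x : Fin n → ℝ} (hpos : 0 < nv n 1 x) {j k : Fin n}
    (hk : x k = 0) (hj : 0 < x j) : phi n x j < phi n x k := by
  apply Finset.sum_lt_sum
  · intro q hq
    rw [mem_Ico] at hq
    apply mul_le_mul_of_nonneg_left _ (aco_pos hq.2).le
    apply sub_le_sub_left
    exact min_le_min le_rfl (hk ▸ hj.le)
  · refine ⟨1, by rw [mem_Ico]; omega, ?_⟩
    apply mul_lt_mul_of_pos_left _ (aco_pos (by omega))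
    apply sub_lt_sub_left
    rw [hk, min_eq_right hpos.le]
    exact lt_min hpos hj

lemma phi_argmax (hn : 2 ≤ n) {x : Fin n → ℝ} (h0 : ∀ k, 0 ≤ x k) (hz : ∃ k, x k = 0)
    (hpos : 0 < nv n 1 x) :
    (univ.filter fun j => nv n 1 (phi n x) ≤ phi n x j) = univ.filter fun j => x j = 0 := by
  obtain ⟨k0, hk0⟩ := hz
  have hmax : ∀ j, phi n x j ≤ phi n x k0 := fun j => phi_mono x (by rw [hk0]; exact h0 j)
  have h1 : nv n 1 (phi n x) = phi n x k0 := by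
    refine le_antisymm ?_ (le_nv_one (by omega) _ k0)
    have hc := le_nv_self le_rfl (by omega : 1 ≤ n) (phi n x)
    obtain ⟨j, hj⟩ := Finset.card_pos.mp (lt_of_lt_of_le Nat.zero_lt_one hc)
    simp only [mem_filter, mem_univ, true_and] at hj
    exact hj.trans (hmax j)
  ext j
  simp only [mem_filter, mem_univ, true_and, h1]
  constructor
  · intro h
    by_contra hne
    have hjp : 0 < x j := lt_of_le_of_ne (h0 j) (Ne.symm hne)
    exact absurd h (not_le.mpr (phi_strict hn hpos hk0 hjp))
  · intro h
    exact phi_mono x (by rw [h]; exact h0 k0)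


lemma dcoef_mct {p : ℕ} (hp1 : 1 ≤ p) (hpn : p < n) (x : Fin n → ℝ)
    (hne : nv n p x ≠ nv n (p+1) x) : mct x (nv n p x) = p := by
  refine le_antisymm ?_ (le_nv_self hp1 (by omega) x)
  by_contra hc
  push_neg at hc
  have h1 : nv n p x ≤ nv n (p+1) x := (le_nv_iff (by omega) (by omega) x).mpr hc
  have h2 : nv n (p+1) x ≤ nv n p x := nv_antitone hp1 (by omega) (by omega) x
  exact hne (le_antisymm h2 h1).symm

lemma sum_ite_mct (x : Fin n → ℝ) (t d : ℝ) :
    ∑ j, (if t ≤ x j then d else 0) = (mct x t : ℝ) * d := by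
  rw [← Finset.sum_filter, Finset.sum_const, mct, nsmul_eq_mul]

lemma sum_aco : ∀ {p : ℕ}, p < n → ∑ q ∈ Ico 1 (p+1), aco n q = (p:ℝ) / ((n:ℝ) - p) := by
  intro p
  induction p with
  | zero => intro _; simp
  | succ p ih =>
      intro hpn
      have hpn' : p < n := by omega
      rw [Finset.sum_Ico_succ_top (by omega), ih hpn']
      have hc : ((p:ℝ)+1) < (n:ℝ) := by exact_mod_cast hpn
      have h1 : ((n:ℝ) - p) ≠ 0 := by linarith
      have h2 : ((n:ℝ) - (p+1)) ≠ 0 := by linarith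
      unfold aco
      push_cast
      rw [show (n:ℝ) - ((p:ℝ) + 1) + 1 = (n:ℝ) - p from by ring]
      field_simp
      ring

lemma coord_decomp (hn : 1 ≤ n) {x : Fin n → ℝ} (h0 : ∀ k, 0 ≤ x k) (hz : ∃ k, x k = 0)
    (j : Fin n) :
    ∑ p ∈ Ico 1 n, (min (nv n p x) (x j) - min (nv n (p+1) x) (x j)) = x j := by
  rw [tele (fun p => min (nv n p x) (x j)) hn]
  rw [min_eq_right (le_nv_one hn x j), nv_n_eq_zero hn h0 hz]
  rw [min_eq_left (h0 j), sub_zero]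

lemma sum_eq_sum_d (hn : 1 ≤ n) {x : Fin n → ℝ} (h0 : ∀ k, 0 ≤ x k) (hz : ∃ k, x k = 0) :
    ∑ j, x j = ∑ p ∈ Ico 1 n, (p:ℝ) * (nv n p x - nv n (p+1) x) := by
  have h1 : ∑ j, x j
      = ∑ j, ∑ p ∈ Ico 1 n, (min (nv n p x) (x j) - min (nv n (p+1) x) (x j)) :=
    (Finset.sum_congr rfl (fun j _ => (coord_decomp hn h0 hz j).symm))
  rw [h1, Finset.sum_comm]
  apply Finset.sum_congr rfl
  intro p hp
  rw [mem_Ico] at hp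
  have h2 : ∀ j : Fin n, min (nv n p x) (x j) - min (nv n (p+1) x) (x j)
      = if nv n p x ≤ x j then nv n p x - nv n (p+1) x else 0 :=
    fun j => min_nv_sub hp.1 hp.2 x j
  rw [Finset.sum_congr rfl (fun j _ => h2 j), sum_ite_mct]
  by_cases hd : nv n p x = nv n (p+1) x
  · rw [hd, sub_self, mul_zero, mul_zero]
  · rw [dcoef_mct hp.1 hp.2 x hd]

lemma sum_u (hn : 1 ≤ n) {x : Fin n → ℝ} (h0 : ∀ k, 0 ≤ x k) (hz : ∃ k, x k = 0)
    {q : ℕ} (hq1 : 1 ≤ q) (hqn : q ≤ n) :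
    ∑ j, (nv n q x - min (nv n q x) (x j))
      = ∑ p ∈ Ico q n, ((n:ℝ) - (mct x (nv n p x) : ℝ)) * (nv n p x - nv n (p+1) x) := by
  have hper : ∀ j : Fin n, nv n q x - min (nv n q x) (x j)
      = ∑ p ∈ Ico q n, ((nv n p x - nv n (p+1) x)
          - (min (nv n p x) (x j) - min (nv n (p+1) x) (x j))) := by
    intro j
    rw [Finset.sum_sub_distrib, tele (fun p => nv n p x) hqn,
      tele (fun p => min (nv n p x) (x j)) hqn, nv_n_eq_zero hn h0 hz, min_eq_left (h0 j)]
    ring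
  rw [Finset.sum_congr rfl (fun j _ => hper j), Finset.sum_comm]
  apply Finset.sum_congr rfl
  intro p hp
  rw [mem_Ico] at hp
  have hp1 : 1 ≤ p := le_trans hq1 hp.1
  have h2 : ∀ j : Fin n, min (nv n p x) (x j) - min (nv n (p+1) x) (x j)
      = if nv n p x ≤ x j then nv n p x - nv n (p+1) x else 0 :=
    fun j => min_nv_sub hp1 hp.2 x j
  rw [Finset.sum_sub_distrib, Finset.sum_congr rfl (fun j _ => h2 j), sum_ite_mct,
    Finset.sum_const, nsmul_eq_mul]
  simp only [Finset.card_univ, Fintype.card_fin]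
  ring

lemma phi_sum (hn : 2 ≤ n) {x : Fin n → ℝ} (h0 : ∀ k, 0 ≤ x k) (hz : ∃ k, x k = 0)
    (hs : ∑ k, x k = 1) : ∑ j, phi n x j = 1 := by
  have hn1 : 1 ≤ n := by omega
  have h1 : ∑ j, phi n x j
      = ∑ q ∈ Ico 1 n, aco n q * ∑ j, (nv n q x - min (nv n q x) (x j)) := by
    simp only [phi]
    rw [Finset.sum_comm]
    exact Finset.sum_congr rfl (fun q _ => (Finset.mul_sum _ _ _).symm)
  rw [h1]
  have h2 : ∀ q ∈ Ico 1 n, aco n q * ∑ j, (nv n q x - min (nv n q x) (x j))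
      = ∑ p ∈ Ico q n, aco n q * (((n:ℝ) - (mct x (nv n p x) : ℝ)) * (nv n p x - nv n (p+1) x)) := by
    intro q hq
    rw [mem_Ico] at hq
    rw [sum_u hn1 h0 hz hq.1 (le_of_lt hq.2), Finset.mul_sum]
  rw [Finset.sum_congr rfl h2, Finset.sum_Ico_Ico_comm]
  have h3 : ∀ p ∈ Ico 1 n,
      ∑ q ∈ Ico 1 (p+1), aco n q * (((n:ℝ) - (mct x (nv n p x) : ℝ)) * (nv n p x - nv n (p+1) x))
        = (p:ℝ) * (nv n p x - nv n (p+1) x) := by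
    intro p hp
    rw [mem_Ico] at hp
    rw [← Finset.sum_mul, sum_aco hp.2]
    by_cases hd : nv n p x = nv n (p+1) x
    · rw [hd, sub_self, mul_zero, mul_zero, mul_zero]
    · rw [dcoef_mct hp.1 hp.2 x hd]
      have hc : (p:ℝ) < (n:ℝ) := by exact_mod_cast hp.2
      have h4 : ((n:ℝ) - p) ≠ 0 := by linarith
      field_simp
  rw [Finset.sum_congr rfl h3, ← sum_eq_sum_d hn1 h0 hz, hs]


noncomputable def spp (x : Fin n → ℝ) : Finset (Fin n) := univ.filter fun j => x j ≠ 0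

def Spx (x : Fin n → ℝ) : Prop := (∀ j, 0 ≤ x j) ∧ (∑ j, x j) = 1 ∧ ∃ k, x k = 0

lemma lt_filter_compl (x : Fin n → ℝ) (t : ℝ) :
    univ.filter (fun j => x j < t) = (univ.filter fun j => t ≤ x j)ᶜ := by
  rw [Finset.compl_filter]
  ext j; simp [not_le]

lemma zero_filter_eq (x : Fin n → ℝ) :
    univ.filter (fun j => x j = 0) = (spp x)ᶜ := by
  rw [spp, Finset.compl_filter]
  ext j; simp

lemma spp_nonempty {x : Fin n → ℝ} (hs : (∑ j, x j) = 1) : (spp x).Nonempty := by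
  rw [Finset.nonempty_iff_ne_empty]
  intro h
  have hall : ∀ j, x j = 0 := by
    intro j
    by_contra hj
    have hjm : j ∈ spp x := by simp [spp, hj]
    rw [h] at hjm
    exact absurd hjm (Finset.notMem_empty j)
  rw [Finset.sum_congr rfl (fun j _ => hall j)] at hs
  simp at hs

lemma nv1_pos (hn1 : 1 ≤ n) {x : Fin n → ℝ} (h0 : ∀ j, 0 ≤ x j) (hs : (∑ j, x j) = 1) :
    0 < nv n 1 x := by
  have : ∃ j, 0 < x j := by
    by_contra h
    push_neg at h
    have : ∀ j, x j = 0 := fun j => le_antisymm (h j) (h0 j)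
    rw [Finset.sum_congr rfl (fun j _ => this j)] at hs
    simp at hs
  obtain ⟨j, hj⟩ := this
  exact lt_of_lt_of_le hj (le_nv_one hn1 x j)

lemma spp_phi (hn : 2 ≤ n) (x : Fin n → ℝ) :
    spp (phi n x) = univ.filter (fun j => x j < nv n 1 x) := by
  ext j
  simp only [spp, mem_filter, mem_univ, true_and]
  exact phi_supp hn x j

lemma phi_Spx (hn : 2 ≤ n) {x : Fin n → ℝ} (hx : Spx x) : Spx (phi n x) := by
  obtain ⟨h0, hs, hz⟩ := hx
  refine ⟨phi_nonneg x, phi_sum hn h0 hz hs, ?_⟩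
  have h1 := le_nv_self le_rfl (by omega : 1 ≤ n) x
  obtain ⟨j, hj⟩ := Finset.card_pos.mp (lt_of_lt_of_le Nat.zero_lt_one h1)
  simp only [mem_filter, mem_univ, true_and] at hj
  refine ⟨j, ?_⟩
  by_contra h
  exact (not_lt.mpr hj) ((phi_supp hn x j).mp h)

/- tau and rmap -/

noncomputable def tauSet (X : SComplex n) : Finset (Finset (Fin n)) :=
  univ.filter (fun F => F ∉ X ∧ F.Nonempty)

noncomputable def tau (X : SComplex n) (x : Fin n → ℝ) : ℝ :=
  if h : (tauSet X).Nonempty then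
    (tauSet X).sup' h (fun F => if hF : F.Nonempty then F.inf' hF x else 0)
  else 0

noncomputable def sig (X : SComplex n) (x : Fin n → ℝ) : ℝ := ∑ k, min (x k) (tau X x)

noncomputable def rmap (X : SComplex n) (x : Fin n → ℝ) : Fin n → ℝ :=
  fun j => min (x j) (tau X x) / sig X x

lemma tau_cont (X : SComplex n) : Continuous (tau X) := by
  unfold tau
  by_cases h : (tauSet X).Nonempty
  · simp only [dif_pos h]; exact cont_sup' h (fun F => cont_dinf F)
  · simp only [dif_neg h]; exact continuous_const

lemma sig_cont (X : SComplex n) : Continuous (sig X) :=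
  continuous_finset_sum _ fun k _ => (continuous_apply k).min (tau_cont X)

lemma le_tau (X : SComplex n) {F : Finset (Fin n)} (hFX : F ∉ X) (hFne : F.Nonempty)
    (x : Fin n → ℝ) : F.inf' hFne x ≤ tau X x := by
  have hmem : F ∈ tauSet X := by simp [tauSet, hFX, hFne]
  have hts : (tauSet X).Nonempty := ⟨F, hmem⟩
  rw [tau, dif_pos hts]
  refine le_trans ?_ (Finset.le_sup' _ hmem)
  simp only [dif_pos hFne]
  exact le_rfl

lemma tau_attained (X : SComplex n) (hts : (tauSet X).Nonempty) (x : Fin n → ℝ) :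
    ∃ F : Finset (Fin n), F ∉ X ∧ F.Nonempty ∧ ∀ j ∈ F, tau X x ≤ x j := by
  obtain ⟨F, hFmem, hFe⟩ := Finset.exists_mem_eq_sup' hts
    (fun F => if hF : F.Nonempty then F.inf' hF x else 0)
  simp only [tauSet, mem_filter, mem_univ, true_and] at hFmem
  refine ⟨F, hFmem.1, hFmem.2, ?_⟩
  intro j hj
  rw [tau, dif_pos hts, hFe, dif_pos hFmem.2]
  exact Finset.inf'_le x hj

lemma tau_pos (X : SComplex n) {x : Fin n → ℝ} (h0 : ∀ j, 0 ≤ x j) (hs : (∑ j, x j) = 1)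
    (hsX : spp x ∉ X) : 0 < tau X x := by
  have hne : (spp x).Nonempty := spp_nonempty hs
  refine lt_of_lt_of_le ?_ (le_tau X hsX hne x)
  rw [Finset.lt_inf'_iff]
  intro j hj
  simp only [spp, mem_filter, mem_univ, true_and] at hj
  exact lt_of_le_of_ne (h0 j) (Ne.symm hj)

lemma tau_le_nv1 (hn1 : 1 ≤ n) (X : SComplex n) (hts : (tauSet X).Nonempty) (x : Fin n → ℝ) :
    tau X x ≤ nv n 1 x := by
  obtain ⟨F, hFX, hFne, hF⟩ := tau_attained X hts x
  obtain ⟨j, hj⟩ := hFne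
  exact le_trans (hF j hj) (le_nv_one hn1 x j)

lemma filter_tau_notin (X : SComplex n) (hX : IsSComplex X) (hts : (tauSet X).Nonempty)
    (x : Fin n → ℝ) : (univ.filter fun j => tau X x ≤ x j) ∉ X := by
  obtain ⟨F, hFX, hFne, hF⟩ := tau_attained X hts x
  intro hmem
  apply hFX
  apply hX _ hmem
  intro j hj
  simp only [mem_filter, mem_univ, true_and]
  exact hF j hj

lemma exists_tau_le (X : SComplex n) (hts : (tauSet X).Nonempty) (x : Fin n → ℝ) :
    ∃ j, tau X x ≤ x j := by
  obtain ⟨F, hFX, hFne, hF⟩ := tau_attained X hts x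
  obtain ⟨j, hj⟩ := hFne
  exact ⟨j, hF j hj⟩

lemma sig_pos (X : SComplex n) (hts : (tauSet X).Nonempty) {x : Fin n → ℝ}
    (h0 : ∀ j, 0 ≤ x j) (hs : (∑ j, x j) = 1) (hsX : spp x ∉ X) : 0 < sig X x := by
  have htau := tau_pos X h0 hs hsX
  obtain ⟨j, hj⟩ := exists_tau_le X hts x
  apply Finset.sum_pos'
  · intro k _
    exact le_min (h0 k) htau.le
  · exact ⟨j, mem_univ j, by rw [min_eq_right hj]; exact htau⟩

lemma rmap_nonneg (X : SComplex n) (hts : (tauSet X).Nonempty) {x : Fin n → ℝ}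
    (h0 : ∀ j, 0 ≤ x j) (hs : (∑ j, x j) = 1) (hsX : spp x ∉ X) (j : Fin n) :
    0 ≤ rmap X x j :=
  div_nonneg (le_min (h0 j) (tau_pos X h0 hs hsX).le) (sig_pos X hts h0 hs hsX).le

lemma rmap_sum (X : SComplex n) (hts : (tauSet X).Nonempty) {x : Fin n → ℝ}
    (h0 : ∀ j, 0 ≤ x j) (hs : (∑ j, x j) = 1) (hsX : spp x ∉ X) :
    (∑ j, rmap X x j) = 1 := by
  simp only [rmap]
  rw [← Finset.sum_div]
  exact div_self (sig_pos X hts h0 hs hsX).ne'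

lemma rmap_spp (X : SComplex n) (hts : (tauSet X).Nonempty) {x : Fin n → ℝ}
    (h0 : ∀ j, 0 ≤ x j) (hs : (∑ j, x j) = 1) (hsX : spp x ∉ X) :
    spp (rmap X x) = spp x := by
  have htau := tau_pos X h0 hs hsX
  have hsig := sig_pos X hts h0 hs hsX
  ext j
  simp only [spp, mem_filter, mem_univ, true_and, rmap]
  show j ∈ univ.filter (fun j => rmap X x j ≠ 0) ↔ x j ≠ 0
  rw [mem_filter]
  simp only [mem_univ, true_and, rmap]
  rw [div_ne_zero_iff]
  constructor
  · rintro ⟨h1, -⟩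
    intro h
    rw [h, min_eq_left htau.le] at h1
    exact h1 rfl
  · intro h
    refine ⟨?_, hsig.ne'⟩
    have : 0 < x j := lt_of_le_of_ne (h0 j) (Ne.symm h)
    exact (lt_min this htau).ne'

lemma rmap_argmax (hn1 : 1 ≤ n) (X : SComplex n) (hts : (tauSet X).Nonempty) {x : Fin n → ℝ}
    (h0 : ∀ j, 0 ≤ x j) (hs : (∑ j, x j) = 1) (hsX : spp x ∉ X) :
    (univ.filter fun j => nv n 1 (rmap X x) ≤ rmap X x j)
      = univ.filter fun j => tau X x ≤ x j := by
  have htau := tau_pos X h0 hs hsX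
  have hsig := sig_pos X hts h0 hs hsX
  have hmax : nv n 1 (rmap X x) = tau X x / sig X x := by
    refine le_antisymm ?_ ?_
    · have h1 := le_nv_self le_rfl hn1 (rmap X x)
      obtain ⟨k, hk⟩ := Finset.card_pos.mp (lt_of_lt_of_le Nat.zero_lt_one h1)
      simp only [mem_filter, mem_univ, true_and] at hk
      refine le_trans hk ?_
      rw [rmap]
      exact (div_le_div_iff_of_pos_right hsig).mpr (min_le_right _ _)
    · obtain ⟨j, hj⟩ := exists_tau_le X hts x
      have : rmap X x j = tau X x / sig X x := by rw [rmap, min_eq_right hj]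
      exact this ▸ le_nv_one hn1 (rmap X x) j
  ext j
  simp only [mem_filter, mem_univ, true_and, hmax, rmap]
  rw [div_le_div_iff_of_pos_right hsig, le_min_iff]
  constructor
  · exact fun h => h.1
  · exact fun h => ⟨h, le_rfl⟩

lemma rmap_fix (hn1 : 1 ≤ n) (X : SComplex n) (hts : (tauSet X).Nonempty) {x : Fin n → ℝ}
    (hs : (∑ j, x j) = 1) (hnot : (univ.filter fun j => nv n 1 x ≤ x j) ∉ X) :
    rmap X x = x := by
  have h1 := le_nv_self le_rfl hn1 x
  have hFne : (univ.filter fun j => nv n 1 x ≤ x j).Nonempty :=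
    Finset.card_pos.mp (lt_of_lt_of_le Nat.zero_lt_one h1)
  have h2 : nv n 1 x ≤ tau X x := by
    refine le_trans ?_ (le_tau X hnot hFne x)
    rw [Finset.le_inf'_iff]
    intro j hj
    exact (mem_filter.mp hj).2
  have h3 : tau X x = nv n 1 x := le_antisymm (tau_le_nv1 hn1 X hts x) h2
  have h4 : ∀ j, min (x j) (tau X x) = x j := by
    intro j
    rw [h3, min_eq_left (le_nv_one hn1 x j)]
  have h5 : sig X x = 1 := by
    rw [sig]
    rw [Finset.sum_congr rfl (fun j _ => h4 j)]
    exact hs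
  funext j
  rw [rmap, h4 j, h5, div_one]

lemma spp_combo {x y : Fin n → ℝ} (h0x : ∀ j, 0 ≤ x j) (h0y : ∀ j, 0 ≤ y j)
    (hsupp : spp y = spp x) {t : ℝ} (ht0 : 0 ≤ t) (ht1 : t ≤ 1) :
    spp (fun j => (1-t) * x j + t * y j) = spp x := by
  ext j
  simp only [spp, mem_filter, mem_univ, true_and]
  constructor
  · intro h
    by_contra hx
    have hy : y j = 0 := by
      have hj : j ∉ spp x := by simp [spp, hx]
      rw [← hsupp] at hj
      simpa [spp] using hj
    rw [hx, hy] at h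
    simp at h
  · intro hx
    have hxp : 0 < x j := lt_of_le_of_ne (h0x j) (Ne.symm hx)
    rcases eq_or_lt_of_le ht0 with h | h
    · rw [← h]; simpa using hxp.ne'
    · have hy : 0 < y j := by
        have hj : j ∈ spp x := by simp [spp, hx]
        rw [← hsupp] at hj
        simp only [spp, mem_filter, mem_univ, true_and] at hj
        exact lt_of_le_of_ne (h0y j) (Ne.symm hj)
      have : 0 < (1-t) * x j + t * y j :=
        add_pos_of_nonneg_of_pos (mul_nonneg (by linarith) hxp.le) (mul_pos h hy)
      exact this.ne'


lemma seg_homotopic {n : ℕ} {A : Set (Fin n → ℝ)}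
    (hA : ∀ x ∈ A, ∀ y : Fin n → ℝ, (∀ j, 0 ≤ y j) → (∑ j, y j) = 1 → spp y = spp x →
      ∀ t : ℝ, 0 ≤ t → t ≤ 1 → (fun j => (1-t) * x j + t * y j) ∈ A)
    (f : C(↥A, ↥A))
    (hf0 : ∀ x : ↥A, ∀ j, 0 ≤ (f x).val j)
    (hf1 : ∀ x : ↥A, (∑ j, (f x).val j) = 1)
    (hfs : ∀ x : ↥A, spp ((f x).val) = spp x.val) :
    f.Homotopic (ContinuousMap.id ↥A) := by
  have hmem : ∀ (p : ↑unitInterval × ↥A),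
      (fun j => (1 - (1 - p.1.val)) * p.2.val j + (1 - p.1.val) * (f p.2).val j) ∈ A :=
    fun p => hA p.2.val p.2.2 (f p.2).val (hf0 p.2) (hf1 p.2) (hfs p.2) (1 - p.1.val)
      (by linarith [p.1.2.2]) (by linarith [p.1.2.1])
  refine ⟨⟨⟨fun p => ⟨_, hmem p⟩, ?_⟩, ?_, ?_⟩⟩
  · apply Continuous.subtype_mk
    apply continuous_pi
    intro j
    have hc1 : Continuous fun p : ↑unitInterval × ↥A => p.1.val :=
      continuous_subtype_val.comp continuous_fst
    have hc2 : Continuous fun p : ↑unitInterval × ↥A => p.2.val j :=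
      (continuous_apply j).comp (continuous_subtype_val.comp continuous_snd)
    have hc3 : Continuous fun p : ↑unitInterval × ↥A => (f p.2).val j :=
      (continuous_apply j).comp (continuous_subtype_val.comp (f.continuous.comp continuous_snd))
    exact ((continuous_const.sub (continuous_const.sub hc1)).mul hc2).add
      ((continuous_const.sub hc1).mul hc3)
  · intro x
    apply Subtype.ext
    funext j
    show (1 - (1 - ((0 : ↑unitInterval) : ℝ))) * x.val j
        + (1 - ((0 : ↑unitInterval) : ℝ)) * (f x).val j = (f x).val j
    norm_num
  · intro x
    apply Subtype.ext
    funext j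
    show (1 - (1 - ((1 : ↑unitInterval) : ℝ))) * x.val j
        + (1 - ((1 : ↑unitInterval) : ℝ)) * (f x).val j = x.val j
    norm_num

end AD


/-- if `X` is a nonempty proper subcomplex of the boundary sphere
`Δ \ {[n]}`, then the realization of the Alexander dual `X^∨` is homotopy
equivalent to the complement `S^{n-2} \ |X|`. -/
theorem dual_homotopyEquiv_complement {n : ℕ} (X : SComplex n) (hX : IsSComplex X)
    (hne : ∃ v : Fin n, {v} ∈ X) (hsub : X ⊆ boundaryComplex n)
    (hproper : X ≠ boundaryComplex n) :
    Nonempty (ContinuousMap.HomotopyEquiv (geomReal (dualC X))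
      ((geomReal (boundaryComplex n) \ geomReal X : Set (Fin n → ℝ)))) := by
  classical
  obtain ⟨v, hv⟩ := hne
  have hX0 : ∅ ∈ X := hX {v} hv ∅ (Finset.empty_subset _)
  have hn : 2 ≤ n := by
    have hvu : ({v} : Finset (Fin n)) ≠ Finset.univ := hsub hv
    have h1 : ({v} : Finset (Fin n)) ⊂ Finset.univ :=
      (Finset.subset_univ _).ssubset_of_ne hvu
    have h2 := Finset.card_lt_card h1
    rw [Finset.card_singleton, Finset.card_univ, Fintype.card_fin] at h2
    omega
  have hn1 : 1 ≤ n := by omega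
  have hts : (AD.tauSet X).Nonempty := by
    obtain ⟨F, hFb, hFX⟩ : ∃ F, F ∈ boundaryComplex n ∧ F ∉ X := by
      by_contra h
      push_neg at h
      exact hproper (Set.Subset.antisymm hsub h)
    refine ⟨F, ?_⟩
    simp only [AD.tauSet, Finset.mem_filter, Finset.mem_univ, true_and]
    exact ⟨hFX, Finset.nonempty_iff_ne_empty.mpr (fun h => hFX (h ▸ hX0))⟩
  have hmemD : ∀ x : Fin n → ℝ, x ∈ geomReal (dualC X) ↔
      ((∀ j, 0 ≤ x j) ∧ (∑ j, x j) = 1 ∧ (AD.spp x)ᶜ ∉ X) := fun x => Iff.rfl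
  have hmemY : ∀ x : Fin n → ℝ,
      x ∈ (geomReal (boundaryComplex n) \ geomReal X : Set (Fin n → ℝ)) ↔
      ((∀ j, 0 ≤ x j) ∧ (∑ j, x j) = 1 ∧ AD.spp x ≠ Finset.univ ∧ AD.spp x ∉ X) := by
    intro x
    simp only [Set.mem_diff, geomReal, Set.mem_setOf_eq, boundaryComplex, AD.spp]
    constructor
    · rintro ⟨⟨h0, hs, hb⟩, hnot⟩
      exact ⟨h0, hs, hb, fun hXmem => hnot ⟨h0, hs, hXmem⟩⟩
    · rintro ⟨h0, hs, hb, hnX⟩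
      exact ⟨⟨h0, hs, hb⟩, fun hmem => hnX hmem.2.2⟩
  have hzD : ∀ x : Fin n → ℝ, (AD.spp x)ᶜ ∉ X → ∃ k, x k = 0 := by
    intro x h
    by_contra hc
    push_neg at hc
    have huniv : AD.spp x = Finset.univ := by
      apply Finset.eq_univ_of_forall
      intro j
      simp [AD.spp, hc j]
    rw [huniv, Finset.compl_univ] at h
    exact h hX0
  have hzY : ∀ x : Fin n → ℝ, AD.spp x ≠ Finset.univ → ∃ k, x k = 0 := by
    intro x h
    rw [Ne, Finset.eq_univ_iff_forall] at h
    push_neg at h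
    obtain ⟨j, hj⟩ := h
    refine ⟨j, ?_⟩
    by_contra hc
    exact hj (by simp [AD.spp, hc])
  -- the forward map sends the dual complex into the complement
  have hfY : ∀ x : Fin n → ℝ, x ∈ geomReal (dualC X) →
      AD.phi n x ∈ (geomReal (boundaryComplex n) \ geomReal X : Set (Fin n → ℝ)) := by
    intro x hx
    obtain ⟨h0, hs, hd⟩ := (hmemD x).mp hx
    have hz := hzD x hd
    have hpos := AD.nv1_pos hn1 h0 hs
    rw [hmemY]
    refine ⟨AD.phi_nonneg x, AD.phi_sum hn h0 hz hs, ?_, ?_⟩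
    · rw [AD.spp_phi hn x]
      intro hun
      have h1 := AD.le_nv_self le_rfl hn1 x
      obtain ⟨j, hj⟩ := Finset.card_pos.mp (lt_of_lt_of_le Nat.zero_lt_one h1)
      simp only [Finset.mem_filter, Finset.mem_univ, true_and] at hj
      have hj2 : j ∈ Finset.univ.filter (fun j => x j < AD.nv n 1 x) := by
        rw [hun]; exact Finset.mem_univ j
      simp only [Finset.mem_filter, Finset.mem_univ, true_and] at hj2
      exact absurd hj2 (not_lt.mpr hj)
    · rw [AD.spp_phi hn x]
      intro hmem
      apply hd
      apply hX _ hmem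
      intro j hj
      have hj0 : x j = 0 := by
        have hns : j ∉ AD.spp x := Finset.mem_compl.mp hj
        by_contra hc
        exact hns (by simp [AD.spp, hc])
      simp only [Finset.mem_filter, Finset.mem_univ, true_and]
      rw [hj0]
      exact hpos
  have hgD : ∀ x : Fin n → ℝ,
      x ∈ (geomReal (boundaryComplex n) \ geomReal X : Set (Fin n → ℝ)) →
      AD.phi n (AD.rmap X x) ∈ geomReal (dualC X) := by
    intro x hx
    obtain ⟨h0, hs, hu, hnX⟩ := (hmemY x).mp hx
    have hr0 : ∀ j, 0 ≤ AD.rmap X x j := AD.rmap_nonneg X hts h0 hs hnX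
    have hrs : (∑ j, AD.rmap X x j) = 1 := AD.rmap_sum X hts h0 hs hnX
    have hrz : ∃ k, AD.rmap X x k = 0 := by
      obtain ⟨k, hk⟩ := hzY x hu
      refine ⟨k, ?_⟩
      have hmin : min (x k) (AD.tau X x) = 0 := by
        rw [hk]
        exact min_eq_left (AD.tau_pos X h0 hs hnX).le
      simp [AD.rmap, hmin]
    rw [hmemD]
    refine ⟨AD.phi_nonneg _, AD.phi_sum hn hr0 hrz hrs, ?_⟩
    rw [AD.spp_phi hn (AD.rmap X x), AD.lt_filter_compl, compl_compl,
      AD.rmap_argmax hn1 X hts h0 hs hnX]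
    exact AD.filter_tau_notin X hX hts x
  -- continuity of the retraction on the complement
  have hrcont : Continuous fun x : (geomReal (boundaryComplex n) \ geomReal X :
      Set (Fin n → ℝ)) => AD.rmap X x.val := by
    apply continuous_pi
    intro j
    apply Continuous.div
    · exact ((continuous_apply j).comp continuous_subtype_val).min
        ((AD.tau_cont X).comp continuous_subtype_val)
    · exact (AD.sig_cont X).comp continuous_subtype_val
    · intro x
      obtain ⟨h0, hs, hu, hnX⟩ := (hmemY x.val).mp x.2
      exact (AD.sig_pos X hts h0 hs hnX).ne'
  let f : C(geomReal (dualC X),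
      (geomReal (boundaryComplex n) \ geomReal X : Set (Fin n → ℝ))) :=
    ⟨fun x => ⟨AD.phi n x.val, hfY x.val x.2⟩,
      Continuous.subtype_mk (AD.phi_cont.comp continuous_subtype_val) _⟩
  let g : C((geomReal (boundaryComplex n) \ geomReal X : Set (Fin n → ℝ)),
      geomReal (dualC X)) :=
    ⟨fun x => ⟨AD.phi n (AD.rmap X x.val), hgD x.val x.2⟩,
      Continuous.subtype_mk (AD.phi_cont.comp hrcont) _⟩
  -- straight-line homotopy hypotheses on each side
  have hAD : ∀ x ∈ geomReal (dualC X), ∀ y : Fin n → ℝ, (∀ j, 0 ≤ y j) →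
      (∑ j, y j) = 1 → AD.spp y = AD.spp x → ∀ t : ℝ, 0 ≤ t → t ≤ 1 →
      (fun j => (1-t) * x j + t * y j) ∈ geomReal (dualC X) := by
    intro x hx y hy0 hy1 hysupp t ht0 ht1
    obtain ⟨h0, hs, hd⟩ := (hmemD x).mp hx
    rw [hmemD]
    refine ⟨fun j => add_nonneg (mul_nonneg (by linarith) (h0 j))
      (mul_nonneg ht0 (hy0 j)), ?_, ?_⟩
    · rw [Finset.sum_add_distrib, ← Finset.mul_sum, ← Finset.mul_sum, hs, hy1]
      ring
    · rw [AD.spp_combo h0 hy0 hysupp ht0 ht1]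
      exact hd
  have hAY : ∀ x ∈ (geomReal (boundaryComplex n) \ geomReal X : Set (Fin n → ℝ)),
      ∀ y : Fin n → ℝ, (∀ j, 0 ≤ y j) → (∑ j, y j) = 1 → AD.spp y = AD.spp x →
      ∀ t : ℝ, 0 ≤ t → t ≤ 1 →
      (fun j => (1-t) * x j + t * y j) ∈
        (geomReal (boundaryComplex n) \ geomReal X : Set (Fin n → ℝ)) := by
    intro x hx y hy0 hy1 hysupp t ht0 ht1
    obtain ⟨h0, hs, hu, hnX⟩ := (hmemY x).mp hx
    rw [hmemY]
    refine ⟨fun j => add_nonneg (mul_nonneg (by linarith) (h0 j))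
      (mul_nonneg ht0 (hy0 j)), ?_, ?_, ?_⟩
    · rw [Finset.sum_add_distrib, ← Finset.mul_sum, ← Finset.mul_sum, hs, hy1]
      ring
    · rw [AD.spp_combo h0 hy0 hysupp ht0 ht1]
      exact hu
    · rw [AD.spp_combo h0 hy0 hysupp ht0 ht1]
      exact hnX
  -- key computations
  have key1 : ∀ x ∈ geomReal (dualC X), AD.rmap X (AD.phi n x) = AD.phi n x ∧
      AD.Spx (AD.phi n x) ∧ AD.spp (AD.phi n (AD.phi n x)) = AD.spp x := by
    intro x hx
    obtain ⟨h0, hs, hd⟩ := (hmemD x).mp hx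
    have hz := hzD x hd
    have hpos := AD.nv1_pos hn1 h0 hs
    have harg : (Finset.univ.filter fun j => AD.nv n 1 (AD.phi n x) ≤ AD.phi n x j)
        = (AD.spp x)ᶜ := by
      rw [AD.phi_argmax hn h0 hz hpos, AD.zero_filter_eq]
    have hSpx : AD.Spx (AD.phi n x) := AD.phi_Spx hn ⟨h0, hs, hz⟩
    refine ⟨?_, hSpx, ?_⟩
    · exact AD.rmap_fix hn1 X hts (AD.phi_sum hn h0 hz hs) (by rw [harg]; exact hd)
    · rw [AD.spp_phi hn (AD.phi n x), AD.lt_filter_compl, harg, compl_compl]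
  have key2 : ∀ x ∈ (geomReal (boundaryComplex n) \ geomReal X : Set (Fin n → ℝ)),
      AD.Spx (AD.phi n (AD.rmap X x)) ∧
      AD.spp (AD.phi n (AD.phi n (AD.rmap X x))) = AD.spp x := by
    intro x hx
    obtain ⟨h0, hs, hu, hnX⟩ := (hmemY x).mp hx
    have hr0 : ∀ j, 0 ≤ AD.rmap X x j := AD.rmap_nonneg X hts h0 hs hnX
    have hrs : (∑ j, AD.rmap X x j) = 1 := AD.rmap_sum X hts h0 hs hnX
    have hrspp : AD.spp (AD.rmap X x) = AD.spp x := AD.rmap_spp X hts h0 hs hnX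
    have hrz : ∃ k, AD.rmap X x k = 0 := by
      obtain ⟨k, hk⟩ := hzY x hu
      refine ⟨k, ?_⟩
      have hmin : min (x k) (AD.tau X x) = 0 := by
        rw [hk]
        exact min_eq_left (AD.tau_pos X h0 hs hnX).le
      simp [AD.rmap, hmin]
    have hrSpx : AD.Spx (AD.rmap X x) := ⟨hr0, hrs, hrz⟩
    have hrpos : 0 < AD.nv n 1 (AD.rmap X x) := AD.nv1_pos hn1 hr0 hrs
    refine ⟨AD.phi_Spx hn hrSpx, ?_⟩
    rw [AD.spp_phi hn (AD.phi n (AD.rmap X x)), AD.lt_filter_compl,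
      AD.phi_argmax hn hr0 hrz hrpos, AD.zero_filter_eq, compl_compl, hrspp]
  have hleft : (g.comp f).Homotopic (ContinuousMap.id _) := by
    apply AD.seg_homotopic hAD
    · intro x j
      exact AD.phi_nonneg _ j
    · intro x
      obtain ⟨hfix, hSpx, -⟩ := key1 x.val x.2
      show (∑ j, AD.phi n (AD.rmap X (AD.phi n x.val)) j) = 1
      rw [hfix]
      exact AD.phi_sum hn hSpx.1 hSpx.2.2 hSpx.2.1
    · intro x
      obtain ⟨hfix, -, hsupp⟩ := key1 x.val x.2
      show AD.spp (AD.phi n (AD.rmap X (AD.phi n x.val))) = AD.spp x.val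
      rw [hfix]
      exact hsupp
  have hright : (f.comp g).Homotopic (ContinuousMap.id _) := by
    apply AD.seg_homotopic hAY
    · intro x j
      exact AD.phi_nonneg _ j
    · intro x
      obtain ⟨hSpx, -⟩ := key2 x.val x.2
      show (∑ j, AD.phi n (AD.phi n (AD.rmap X x.val)) j) = 1
      exact AD.phi_sum hn hSpx.1 hSpx.2.2 hSpx.2.1
    · intro x
      obtain ⟨-, hsupp⟩ := key2 x.val x.2
      show AD.spp (AD.phi n (AD.phi n (AD.rmap X x.val))) = AD.spp x.val
      exact hsupp
  exact ⟨⟨f, g, hleft, hright⟩⟩
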